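/- arXiv:2605.05421 — 2 statements merged into one kernel-verified Lean document; each statement's English description precedes it below -/
import Mathlib

section
/- In the ambulance-station continuous-time Markov chain with supply vector m, for every state x ∈ S(m) there exists a finite sequence of states 0 = x_0, x_1, …, x_k = x (where 0 denotes the state with all coordinates zero) such that q^m_{x_i, x_{i+1}} > 0 for every i = 0, …, k−1; that is, every state can be reached from the all-available state 0 through finitely many positive-rate transitions. Consequently, any two states of the chain communicate. -/
/-!
Ambulance-station continuous-time Markov chain.

`C` is the (finite) set of emergency types and `A` the (finite) set of ambulance types.
For each emergency type `c`, `Ac c` is the (nonempty) set of compatible ambulance types,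
`lam c > 0` is the arrival rate, and `succ c` is a strict total order on `Ac c`
(`succ c a a'` meaning `a ≻_c a'`).  For `a ∈ Ac c`, `mu a c > 0` is the service rate.
`m a` is the number of ambulances of type `a` at the station.

A state is encoded as a function `x : A → C → ℕ`, where `x a c` is the number of type-`a`
ambulances busy serving type-`c` emergencies; coordinates `(a, c)` with `a ∉ Ac c` are
required to be `0`.
-/

open Finset

section Ambulance

open scoped Classical

variable {C A : Type*} [Fintype C] [Fintype A] [DecidableEq C] [DecidableEq A]

/-- The number of busy type-`a` ambulances in state `x`: `∑_{c' ∈ C(a)} x_{a,c'}`,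
where `C(a) = {c : a ∈ Ac c}`. -/
def busy (Ac : C → Finset A) (x : A → C → ℕ) (a : A) : ℕ :=
  ∑ c ∈ Finset.univ.filter (fun c => a ∈ Ac c), x a c

/-- The state space `S(m)`: integer vectors `x = (x_{a,c})_{a ∈ A, c ∈ C(a)}` with
`x_{a,c} ≥ 0` and `∑_{c ∈ C(a)} x_{a,c} ≤ m a` for every `a`. -/
noncomputable def stateSpace (Ac : C → Finset A) (m : A → ℕ) : Finset (A → C → ℕ) :=
  (Fintype.piFinset fun a => Fintype.piFinset fun _ => Finset.range (m a + 1)).filter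
    (fun x => (∀ a c, a ∉ Ac c → x a c = 0) ∧ ∀ a, busy Ac x a ≤ m a)

/-- `a` is the `≻_c`-greatest ambulance type that is compatible with `c` and has an
available ambulance in state `x`. -/
def IsPreferred (Ac : C → Finset A) (succ : C → A → A → Prop) (m : A → ℕ)
    (x : A → C → ℕ) (c : C) (a : A) : Prop :=
  a ∈ Ac c ∧ busy Ac x a < m a ∧
    ∀ a' ∈ Ac c, busy Ac x a' < m a' → a' ≠ a → succ c a a'

/-- `x + e_{a,c}`. -/
def incr (x : A → C → ℕ) (a : A) (c : C) : A → C → ℕ :=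
  fun a' c' => if a' = a ∧ c' = c then x a c + 1 else x a' c'

/-- `x − e_{a,c}`. -/
def decr (x : A → C → ℕ) (a : A) (c : C) : A → C → ℕ :=
  fun a' c' => if a' = a ∧ c' = c then x a c - 1 else x a' c'

/-- The off-diagonal transition rates of the chain: rate `lam c` from `x` to `x + e_{â,c}`
where `â` is the `≻_c`-greatest compatible ambulance type with an available ambulance,
rate `mu a c * x a c` from `x` to `x − e_{a,c}` whenever `x a c > 0`, and `0` otherwise. -/
noncomputable def offRate (Ac : C → Finset A) (lam : C → ℝ) (succ : C → A → A → Prop)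
    (mu : A → C → ℝ) (m : A → ℕ) (x x' : A → C → ℕ) : ℝ :=
  (∑ c : C, if ∃ a, IsPreferred Ac succ m x c a ∧ x' = incr x a c then lam c else 0) +
    ∑ a : A, ∑ c : C,
      if a ∈ Ac c ∧ 0 < x a c ∧ x' = decr x a c then mu a c * (x a c : ℝ) else 0

/-- The full transition rate matrix `q^m`, with diagonal entries
`q^m_{x,x} = −∑_{x' ≠ x} q^m_{x,x'}`. -/
noncomputable def qrate (Ac : C → Finset A) (lam : C → ℝ) (succ : C → A → A → Prop)
    (mu : A → C → ℝ) (m : A → ℕ) (x x' : A → C → ℕ) : ℝ :=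
  if x' = x then -(∑ y ∈ (stateSpace Ac m).erase x, offRate Ac lam succ mu m x y)
  else offRate Ac lam succ mu m x x'

/-! ### Auxiliary lemmas -/

section Aux

set_option linter.unusedSectionVars false
variable {C A : Type*} [Fintype C] [Fintype A] [DecidableEq C] [DecidableEq A]
variable (Ac : C → Finset A) (lam : C → ℝ) (succ : C → A → A → Prop)
variable (mu : A → C → ℝ) (m : A → ℕ)

lemma aux_busy_incr_self {x : A → C → ℕ} {a : A} {c : C} (h : a ∈ Ac c) :
    busy Ac (incr x a c) a = busy Ac x a + 1 := by
  have hc : c ∈ Finset.univ.filter (fun c => a ∈ Ac c) := by simp [h]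
  unfold busy
  rw [← Finset.add_sum_erase _ _ hc, ← Finset.add_sum_erase _ _ hc]
  have h1 : incr x a c a c = x a c + 1 := by simp [incr]
  have h3 : ∑ c' ∈ (Finset.univ.filter (fun c => a ∈ Ac c)).erase c, incr x a c a c'
      = ∑ c' ∈ (Finset.univ.filter (fun c => a ∈ Ac c)).erase c, x a c' := by
    refine Finset.sum_congr rfl fun c' hc' => ?_
    have := Finset.ne_of_mem_erase hc'
    simp [incr, this]
  rw [h1, h3]
  omega

lemma aux_busy_incr_ne {x : A → C → ℕ} {a a' : A} {c : C} (h : a' ≠ a) :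
    busy Ac (incr x a c) a' = busy Ac x a' := by
  unfold busy
  refine Finset.sum_congr rfl fun c' _ => ?_
  simp [incr, h]

lemma aux_busy_decr_self {x : A → C → ℕ} {a : A} {c : C} (h : a ∈ Ac c)
    (hpos : 0 < x a c) : busy Ac (decr x a c) a + 1 = busy Ac x a := by
  have hc : c ∈ Finset.univ.filter (fun c => a ∈ Ac c) := by simp [h]
  unfold busy
  rw [← Finset.add_sum_erase _ _ hc, ← Finset.add_sum_erase _ _ hc]
  have h1 : decr x a c a c = x a c - 1 := by simp [decr]
  have h3 : ∑ c' ∈ (Finset.univ.filter (fun c => a ∈ Ac c)).erase c, decr x a c a c'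
      = ∑ c' ∈ (Finset.univ.filter (fun c => a ∈ Ac c)).erase c, x a c' := by
    refine Finset.sum_congr rfl fun c' hc' => ?_
    have := Finset.ne_of_mem_erase hc'
    simp [decr, this]
  rw [h1, h3]
  omega

lemma aux_busy_decr_ne {x : A → C → ℕ} {a a' : A} {c : C} (h : a' ≠ a) :
    busy Ac (decr x a c) a' = busy Ac x a' := by
  unfold busy
  refine Finset.sum_congr rfl fun c' _ => ?_
  simp [decr, h]

lemma aux_incr_ne (x : A → C → ℕ) (a : A) (c : C) : incr x a c ≠ x := by
  intro h
  have := congrFun (congrFun h a) c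
  simp [incr] at this

lemma aux_decr_ne {x : A → C → ℕ} {a : A} {c : C} (hpos : 0 < x a c) :
    decr x a c ≠ x := by
  intro h
  have := congrFun (congrFun h a) c
  simp [decr] at this
  omega

lemma aux_incr_decr {x : A → C → ℕ} {a : A} {c : C} (hpos : 0 < x a c) :
    incr (decr x a c) a c = x := by
  funext a' c'
  by_cases h : a' = a ∧ c' = c
  · obtain ⟨rfl, rfl⟩ := h; simp [incr, decr]; omega
  · simp only [incr, decr, if_neg h]

lemma aux_decr_incr_incr {y : A → C → ℕ} {a a' : A} {c : C} (h : a ≠ a') :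
    decr (incr (incr y a' c) a c) a' c = incr y a c := by
  funext a'' c''
  by_cases h1 : a'' = a' ∧ c'' = c
  · obtain ⟨rfl, rfl⟩ := h1
    simp [incr, decr, h, h.symm]
  · by_cases h2 : a'' = a ∧ c'' = c
    · obtain ⟨rfl, rfl⟩ := h2
      simp [incr, decr, h, h1]
    · simp [incr, decr, h1, h2, h]

lemma aux_offRate_pos_incr (hlam : ∀ c, 0 < lam c) (hmu : ∀ a c, a ∈ Ac c → 0 < mu a c)
    {x : A → C → ℕ} {a : A} {c : C} (hpref : IsPreferred Ac succ m x c a) :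
    0 < qrate Ac lam succ mu m x (incr x a c) := by
  rw [qrate, if_neg (aux_incr_ne x a c)]
  unfold offRate
  have h2 : (0:ℝ) ≤ ∑ a' : A, ∑ c' : C,
      if a' ∈ Ac c' ∧ 0 < x a' c' ∧ incr x a c = decr x a' c' then mu a' c' * (x a' c' : ℝ)
      else 0 := by
    refine Finset.sum_nonneg fun a' _ => Finset.sum_nonneg fun c' _ => ?_
    split_ifs with h
    · exact mul_nonneg (hmu _ _ h.1).le (Nat.cast_nonneg _)
    · exact le_rfl
  have h1 : (0:ℝ) < ∑ c' : C,
      if ∃ a', IsPreferred Ac succ m x c' a' ∧ incr x a c = incr x a' c' then lam c'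
      else 0 := by
    refine Finset.sum_pos' (fun c' _ => ?_) ⟨c, Finset.mem_univ c, ?_⟩
    · split_ifs with h
      · exact (hlam c').le
      · exact le_rfl
    · rw [if_pos ⟨a, hpref, rfl⟩]; exact hlam c
  linarith

lemma aux_offRate_pos_decr (hlam : ∀ c, 0 < lam c) (hmu : ∀ a c, a ∈ Ac c → 0 < mu a c)
    {x : A → C → ℕ} {a : A} {c : C} (hac : a ∈ Ac c) (hpos : 0 < x a c) :
    0 < qrate Ac lam succ mu m x (decr x a c) := by
  rw [qrate, if_neg (aux_decr_ne hpos)]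
  unfold offRate
  have h1 : (0:ℝ) ≤ ∑ c' : C,
      if ∃ a', IsPreferred Ac succ m x c' a' ∧ decr x a c = incr x a' c' then lam c'
      else 0 := by
    refine Finset.sum_nonneg fun c' _ => ?_
    split_ifs with h
    · exact (hlam c').le
    · exact le_rfl
  have h2 : (0:ℝ) < ∑ a' : A, ∑ c' : C,
      if a' ∈ Ac c' ∧ 0 < x a' c' ∧ decr x a c = decr x a' c' then mu a' c' * (x a' c' : ℝ)
      else 0 := by
    refine Finset.sum_pos' (fun a' _ => Finset.sum_nonneg fun c' _ => ?_)
      ⟨a, Finset.mem_univ a, ?_⟩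
    · split_ifs with h
      · exact mul_nonneg (hmu _ _ h.1).le (Nat.cast_nonneg _)
      · exact le_rfl
    · refine Finset.sum_pos' (fun c' _ => ?_) ⟨c, Finset.mem_univ c, ?_⟩
      · split_ifs with h
        · exact mul_nonneg (hmu _ _ h.1).le (Nat.cast_nonneg _)
        · exact le_rfl
      · rw [if_pos ⟨hac, hpos, rfl⟩]
        exact mul_pos (hmu a c hac) (by exact_mod_cast hpos)
  linarith

lemma aux_mem_stateSpace {x : A → C → ℕ} :
    x ∈ stateSpace Ac m ↔
      (∀ a c, a ∉ Ac c → x a c = 0) ∧ ∀ a, busy Ac x a ≤ m a := by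
  constructor
  · intro h
    exact (Finset.mem_filter.mp h).2
  · intro ⟨h0, hb⟩
    refine Finset.mem_filter.mpr ⟨?_, h0, hb⟩
    rw [Fintype.mem_piFinset]
    intro a
    rw [Fintype.mem_piFinset]
    intro c
    rw [Finset.mem_range]
    by_cases hac : a ∈ Ac c
    · have : x a c ≤ busy Ac x a := by
        refine Finset.single_le_sum (fun c' _ => Nat.zero_le _) ?_
        simp [hac]
      have := hb a
      omega
    · rw [h0 a c hac]; omega

end Aux


section Main

set_option linter.unusedSectionVars false
set_option maxHeartbeats 1000000

variable {C A : Type*} [Fintype C] [Fintype A] [DecidableEq C] [DecidableEq A]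
variable (Ac : C → Finset A) (lam : C → ℝ) (succ : C → A → A → Prop)
variable (mu : A → C → ℝ) (m : A → ℕ)

/-- If every strictly `≻_c`-preferred compatible type is fully busy, then `a` is preferred. -/
lemma aux_preferred_of (htotal : ∀ c, ∀ a ∈ Ac c, ∀ b ∈ Ac c, a ≠ b → succ c a b ∨ succ c b a)
    {y : A → C → ℕ} {c : C} {a : A} (hac : a ∈ Ac c) (hb : busy Ac y a < m a)
    (h0 : ∑ a' ∈ (Ac c).filter (fun a' => succ c a' a), (m a' - busy Ac y a') = 0) :
    IsPreferred Ac succ m y c a := by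
  refine ⟨hac, hb, fun a' ha' hb' hne => ?_⟩
  rcases htotal c a hac a' ha' (Ne.symm hne) with h | h
  · exact h
  · exfalso
    have hmem : a' ∈ (Ac c).filter (fun a' => succ c a' a) := Finset.mem_filter.mpr ⟨ha', h⟩
    have := (Finset.sum_eq_zero_iff.mp h0) a' hmem
    omega

/-- Filling lemma: from any state `y` with a free type-`a` ambulance compatible with `c`,
one can reach `incr y a c` by positive-rate transitions. -/
lemma aux_fill (hlam : ∀ c, 0 < lam c) (hmu : ∀ a c, a ∈ Ac c → 0 < mu a c)
    (hirr : ∀ c, ∀ a ∈ Ac c, ¬ succ c a a)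
    (htrans : ∀ c, ∀ a ∈ Ac c, ∀ b ∈ Ac c, ∀ d ∈ Ac c,
      succ c a b → succ c b d → succ c a d)
    (htotal : ∀ c, ∀ a ∈ Ac c, ∀ b ∈ Ac c, a ≠ b → succ c a b ∨ succ c b a) :
    ∀ (k : ℕ) (y : A → C → ℕ) (c : C) (a : A), a ∈ Ac c → busy Ac y a < m a →
      (∑ a' ∈ (Ac c).filter (fun a' => succ c a' a), (m a' - busy Ac y a')) ≤ k →
      Relation.ReflTransGen (fun y y' => 0 < qrate Ac lam succ mu m y y') y (incr y a c) := by
  intro k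
  induction k with
  | zero =>
    intro y c a hac hb hk
    exact Relation.ReflTransGen.single
      (aux_offRate_pos_incr Ac lam succ mu m hlam hmu
        (aux_preferred_of Ac succ m htotal hac hb (Nat.le_zero.mp hk)))
  | succ k ih =>
    intro y c a hac hb hk
    by_cases h0 : ∑ a' ∈ (Ac c).filter (fun a' => succ c a' a), (m a' - busy Ac y a') = 0
    · exact Relation.ReflTransGen.single
        (aux_offRate_pos_incr Ac lam succ mu m hlam hmu
          (aux_preferred_of Ac succ m htotal hac hb h0))
    · -- pick a strictly preferred type with a free ambulance
      obtain ⟨a', ha'mem, ha'pos⟩ : ∃ a' ∈ (Ac c).filter (fun a' => succ c a' a),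
          0 < m a' - busy Ac y a' := by
        by_contra hcon
        push_neg at hcon
        exact h0 (Finset.sum_eq_zero fun a' h => by have := hcon a' h; omega)
      obtain ⟨ha'Ac, ha'succ⟩ := Finset.mem_filter.mp ha'mem
      have ha'b : busy Ac y a' < m a' := by omega
      have hne : a' ≠ a := fun h => hirr c a hac (h ▸ ha'succ)
      -- the strict-preference set of a' is contained in that of a, minus a'
      have hsub : (Ac c).filter (fun a'' => succ c a'' a') ⊆
          ((Ac c).filter (fun a'' => succ c a'' a)).erase a' := by
        intro a'' h
        obtain ⟨hA, hs⟩ := Finset.mem_filter.mp h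
        refine Finset.mem_erase.mpr ⟨fun hEq => hirr c a' ha'Ac (hEq ▸ hs), ?_⟩
        exact Finset.mem_filter.mpr ⟨hA, htrans c a'' hA a' ha'Ac a hac hs ha'succ⟩
      have hdec : ∑ a'' ∈ ((Ac c).filter (fun a'' => succ c a'' a)).erase a',
          (m a'' - busy Ac y a'') ≤ k := by
        have h5 : (m a' - busy Ac y a') +
            ∑ a'' ∈ ((Ac c).filter (fun a'' => succ c a'' a)).erase a',
              (m a'' - busy Ac y a'') =
            ∑ a'' ∈ (Ac c).filter (fun a'' => succ c a'' a), (m a'' - busy Ac y a'') :=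
          Finset.add_sum_erase _ (fun a'' => m a'' - busy Ac y a'') ha'mem
        omega
      have hk' : ∑ a'' ∈ (Ac c).filter (fun a'' => succ c a'' a'),
          (m a'' - busy Ac y a'') ≤ k :=
        le_trans (Finset.sum_le_sum_of_subset hsub) hdec
      -- step 1 : y ⟶* z1 = incr y a' c
      have step1 := ih y c a' ha'Ac ha'b hk'
      set z1 := incr y a' c with hz1
      -- step 2 : z1 ⟶* z2 = incr z1 a c
      have hbz1 : busy Ac z1 a < m a := by
        rw [hz1, aux_busy_incr_ne Ac (Ne.symm hne)]; exact hb
      have hmeasz1 : ∑ a'' ∈ (Ac c).filter (fun a'' => succ c a'' a),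
          (m a'' - busy Ac z1 a'') ≤ k := by
        have hsame : ∀ a'' ∈ ((Ac c).filter (fun a'' => succ c a'' a)).erase a',
            m a'' - busy Ac z1 a'' = m a'' - busy Ac y a'' := by
          intro a'' h
          rw [hz1, aux_busy_incr_ne Ac (Finset.ne_of_mem_erase h)]
        have e1 : (m a' - busy Ac z1 a') +
            ∑ a'' ∈ ((Ac c).filter (fun a'' => succ c a'' a)).erase a',
              (m a'' - busy Ac z1 a'') =
            ∑ a'' ∈ (Ac c).filter (fun a'' => succ c a'' a), (m a'' - busy Ac z1 a'') :=
          Finset.add_sum_erase _ (fun a'' => m a'' - busy Ac z1 a'') ha'mem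
        have e2 : ∑ a'' ∈ ((Ac c).filter (fun a'' => succ c a'' a)).erase a',
            (m a'' - busy Ac z1 a'') =
            ∑ a'' ∈ ((Ac c).filter (fun a'' => succ c a'' a)).erase a',
            (m a'' - busy Ac y a'') := Finset.sum_congr rfl hsame
        have e3 : busy Ac z1 a' = busy Ac y a' + 1 := by
          rw [hz1, aux_busy_incr_self Ac ha'Ac]
        have h5 : (m a' - busy Ac y a') +
            ∑ a'' ∈ ((Ac c).filter (fun a'' => succ c a'' a)).erase a',
              (m a'' - busy Ac y a'') =
            ∑ a'' ∈ (Ac c).filter (fun a'' => succ c a'' a), (m a'' - busy Ac y a'') :=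
          Finset.add_sum_erase _ (fun a'' => m a'' - busy Ac y a'') ha'mem
        omega
      have step2 := ih z1 c a hac hbz1 hmeasz1
      -- step 3 : incr z1 a c ⟶ decr (incr z1 a c) a' c = incr y a c
      have hz2pos : 0 < incr z1 a c a' c := by
        simp [incr, hne, hz1]
      have step3 : (fun y y' => 0 < qrate Ac lam succ mu m y y') (incr z1 a c)
          (decr (incr z1 a c) a' c) :=
        aux_offRate_pos_decr Ac lam succ mu m hlam hmu ha'Ac hz2pos
      have hfinal : decr (incr z1 a c) a' c = incr y a c :=
        aux_decr_incr_incr (Ne.symm hne)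
      exact ((step1.trans step2).tail step3).trans (by rw [hfinal])

/-- Total number of busy ambulances. -/
lemma aux_wt_decr {x : A → C → ℕ} {a : A} {c : C} (hpos : 0 < x a c) :
    (∑ a' : A, ∑ c' : C, decr x a c a' c') + 1 = ∑ a' : A, ∑ c' : C, x a' c' := by
  have ha : a ∈ (Finset.univ : Finset A) := Finset.mem_univ a
  have hc : c ∈ (Finset.univ : Finset C) := Finset.mem_univ c
  rw [← Finset.add_sum_erase _ _ ha, ← Finset.add_sum_erase _ _ ha]
  have e1 : ∑ a' ∈ Finset.univ.erase a, ∑ c' : C, decr x a c a' c'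
      = ∑ a' ∈ Finset.univ.erase a, ∑ c' : C, x a' c' := by
    refine Finset.sum_congr rfl fun a' h => Finset.sum_congr rfl fun c' _ => ?_
    simp [decr, Finset.ne_of_mem_erase h]
  have e2 : ∑ c' : C, decr x a c a c' = (∑ c' : C, x a c') - 1 := by
    rw [← Finset.add_sum_erase _ _ hc, ← Finset.add_sum_erase _ _ hc]
    have e3 : ∑ c' ∈ Finset.univ.erase c, decr x a c a c'
        = ∑ c' ∈ Finset.univ.erase c, x a c' := by
      refine Finset.sum_congr rfl fun c' h => ?_
      simp [decr, Finset.ne_of_mem_erase h]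
    have e4 : decr x a c a c = x a c - 1 := by simp [decr]
    omega
  have e5 : 0 < ∑ c' : C, x a c' :=
    lt_of_lt_of_le hpos (Finset.single_le_sum (fun c' _ => Nat.zero_le _) hc)
  omega

lemma aux_decr_mem {x : A → C → ℕ} {a : A} {c : C} (hx : x ∈ stateSpace Ac m)
    (hac : a ∈ Ac c) (hpos : 0 < x a c) : decr x a c ∈ stateSpace Ac m := by
  obtain ⟨h0, hb⟩ := (aux_mem_stateSpace Ac m).mp hx
  refine (aux_mem_stateSpace Ac m).mpr ⟨?_, ?_⟩
  · intro a' c' h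
    by_cases hcase : a' = a ∧ c' = c
    · exact absurd (hcase.1 ▸ hcase.2 ▸ h) (fun hn => hn hac)
    · simpa [decr, hcase] using h0 a' c' h
  · intro a'
    by_cases hcase : a' = a
    · subst hcase
      have := aux_busy_decr_self Ac hac hpos
      have := hb a'
      omega
    · rw [aux_busy_decr_ne Ac hcase]; exact hb a'

lemma aux_down (hlam : ∀ c, 0 < lam c) (hmu : ∀ a c, a ∈ Ac c → 0 < mu a c) :
    ∀ (n : ℕ) (x : A → C → ℕ), (∑ a : A, ∑ c : C, x a c) ≤ n → x ∈ stateSpace Ac m →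
      Relation.ReflTransGen (fun y y' => 0 < qrate Ac lam succ mu m y y') x
        (fun _ _ => 0) := by
  intro n
  induction n with
  | zero =>
    intro x hW hx
    have : ∀ a c, x a c = 0 := by
      intro a c
      have h1 : ∑ c' : C, x a c' ≤ ∑ a' : A, ∑ c' : C, x a' c' :=
        Finset.single_le_sum (f := fun a' => ∑ c' : C, x a' c')
          (fun a' _ => Nat.zero_le _) (Finset.mem_univ a)
      have h2 : x a c ≤ ∑ c' : C, x a c' :=
        Finset.single_le_sum (fun c' _ => Nat.zero_le _) (Finset.mem_univ c)
      omega
    have : x = fun _ _ => 0 := by funext a c; exact this a c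
    rw [this]
  | succ n ih =>
    intro x hW hx
    by_cases hzero : ∀ a c, x a c = 0
    · have : x = fun _ _ => 0 := by funext a c; exact hzero a c
      rw [this]
    · push_neg at hzero
      obtain ⟨a, c, hpos⟩ := hzero
      have hpos : 0 < x a c := Nat.pos_of_ne_zero hpos
      obtain ⟨h0, hb⟩ := (aux_mem_stateSpace Ac m).mp hx
      have hac : a ∈ Ac c := by
        by_contra hcon
        exact absurd (h0 a c hcon) (by omega)
      have hstep : (fun y y' => 0 < qrate Ac lam succ mu m y y') x (decr x a c) :=
        aux_offRate_pos_decr Ac lam succ mu m hlam hmu hac hpos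
      have hWd : (∑ a' : A, ∑ c' : C, decr x a c a' c') ≤ n := by
        have := aux_wt_decr hpos
        omega
      exact Relation.ReflTransGen.head hstep
        (ih (decr x a c) hWd (aux_decr_mem Ac m hx hac hpos))

lemma aux_up (hlam : ∀ c, 0 < lam c) (hmu : ∀ a c, a ∈ Ac c → 0 < mu a c)
    (hirr : ∀ c, ∀ a ∈ Ac c, ¬ succ c a a)
    (htrans : ∀ c, ∀ a ∈ Ac c, ∀ b ∈ Ac c, ∀ d ∈ Ac c,
      succ c a b → succ c b d → succ c a d)
    (htotal : ∀ c, ∀ a ∈ Ac c, ∀ b ∈ Ac c, a ≠ b → succ c a b ∨ succ c b a) :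
    ∀ (n : ℕ) (x : A → C → ℕ), (∑ a : A, ∑ c : C, x a c) ≤ n → x ∈ stateSpace Ac m →
      Relation.ReflTransGen (fun y y' => 0 < qrate Ac lam succ mu m y y')
        (fun _ _ => 0) x := by
  intro n
  induction n with
  | zero =>
    intro x hW hx
    have : ∀ a c, x a c = 0 := by
      intro a c
      have h1 : ∑ c' : C, x a c' ≤ ∑ a' : A, ∑ c' : C, x a' c' :=
        Finset.single_le_sum (f := fun a' => ∑ c' : C, x a' c')
          (fun a' _ => Nat.zero_le _) (Finset.mem_univ a)
      have h2 : x a c ≤ ∑ c' : C, x a c' :=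
        Finset.single_le_sum (fun c' _ => Nat.zero_le _) (Finset.mem_univ c)
      omega
    have : x = fun _ _ => 0 := by funext a c; exact this a c
    rw [this]
  | succ n ih =>
    intro x hW hx
    by_cases hzero : ∀ a c, x a c = 0
    · have : x = fun _ _ => 0 := by funext a c; exact hzero a c
      rw [this]
    · push_neg at hzero
      obtain ⟨a, c, hpos⟩ := hzero
      have hpos : 0 < x a c := Nat.pos_of_ne_zero hpos
      obtain ⟨h0, hb⟩ := (aux_mem_stateSpace Ac m).mp hx
      have hac : a ∈ Ac c := by
        by_contra hcon
        exact absurd (h0 a c hcon) (by omega)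
      have hymem : decr x a c ∈ stateSpace Ac m := aux_decr_mem Ac m hx hac hpos
      have hWd : (∑ a' : A, ∑ c' : C, decr x a c a' c') ≤ n := by
        have := aux_wt_decr hpos
        omega
      have hreach0y := ih (decr x a c) hWd hymem
      have hby : busy Ac (decr x a c) a < m a := by
        have := aux_busy_decr_self Ac hac hpos
        have := hb a
        omega
      have hfill := aux_fill Ac lam succ mu m hlam hmu hirr htrans htotal
        (∑ a' ∈ (Ac c).filter (fun a' => succ c a' a), (m a' - busy Ac (decr x a c) a'))
        (decr x a c) c a hac hby le_rfl
      rw [aux_incr_decr hpos] at hfill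
      exact hreach0y.trans hfill

end Main


/-- In the ambulance-station continuous-time Markov chain with supply
vector `m`, every state `x ∈ S(m)` can be reached from the all-available state `0`
through finitely many positive-rate transitions; consequently, any two states of the
chain communicate. -/
theorem stmt1
    (Ac : C → Finset A) (lam : C → ℝ) (succ : C → A → A → Prop)
    (mu : A → C → ℝ) (m : A → ℕ)
    (hAc : ∀ c, (Ac c).Nonempty)
    (hlam : ∀ c, 0 < lam c)
    (hmu : ∀ a c, a ∈ Ac c → 0 < mu a c)
    (hirr : ∀ c, ∀ a ∈ Ac c, ¬ succ c a a)
    (htrans : ∀ c, ∀ a ∈ Ac c, ∀ b ∈ Ac c, ∀ d ∈ Ac c,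
      succ c a b → succ c b d → succ c a d)
    (htotal : ∀ c, ∀ a ∈ Ac c, ∀ b ∈ Ac c, a ≠ b → succ c a b ∨ succ c b a) :
    (∀ x ∈ stateSpace Ac m,
        Relation.ReflTransGen (fun y y' => 0 < qrate Ac lam succ mu m y y')
          (fun _ _ => 0) x) ∧
      ∀ x ∈ stateSpace Ac m, ∀ x' ∈ stateSpace Ac m,
        Relation.ReflTransGen (fun y y' => 0 < qrate Ac lam succ mu m y y') x x' := by
  refine ⟨fun x hx =>
      aux_up Ac lam succ mu m hlam hmu hirr htrans htotal _ x le_rfl hx,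
    fun x hx x' hx' =>
      (aux_down Ac lam succ mu m hlam hmu _ x le_rfl hx).trans
        (aux_up Ac lam succ mu m hlam hmu hirr htrans htotal _ x' le_rfl hx')⟩

end Ambulance
end

section
/- In the ambulance-station continuous-time Markov chain with supply vector m, the system of equations ∑_{x ∈ S(m)} ν_x q^m_{x,x'} = 0 for every x' ∈ S(m), together with ∑_{x ∈ S(m)} ν_x = 1, has exactly one solution ν^m = (ν^m_x)_{x ∈ S(m)} ∈ ℝ^{S(m)}, and this solution satisfies ν^m_x > 0 for every x ∈ S(m); that is, the chain has a unique stationary distribution. -/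
/-!
Ambulance-station continuous-time Markov chain.

`C` is the (finite) set of emergency types and `A` the (finite) set of ambulance types.
For each emergency type `c`, `Ac c` is the (nonempty) set of compatible ambulance types,
`lam c > 0` is the arrival rate, and `succ c` is a strict total order on `Ac c`
(`succ c a a'` meaning `a ≻_c a'`).  For `a ∈ Ac c`, `mu a c > 0` is the service rate.
`m a` is the number of ambulances of type `a` at the station.

A state is encoded as a function `x : A → C → ℕ`, where `x a c` is the number of type-`a`
ambulances busy serving type-`c` emergencies; coordinates `(a, c)` with `a ∉ Ac c` are
required to be `0`.
-/

open Finset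

/-!
The rate matrix `q^m` is irreducible: departures lead from every state down to the empty
station, and every state is reached from the empty station by adding one busy ambulance at a
time. For an irreducible generator `Q` on a finite set and a left null vector `ξ`, the vector
`|ξ| Q` is entrywise nonnegative with total mass `|ξ| Q 𝟙 = 0`, so `|ξ|` is a null vector too;
a nonnegative null vector vanishing at one state vanishes at every state leading to it.
Applied to `|ξ| - ξ`, this shows that `ξ` has a constant sign, and then, applied to `±ξ`, that
`ξ` vanishes nowhere unless `ξ = 0`. So the left kernel, nontrivial since `Q 𝟙 = 0`, is spanned
by a positive vector, and normalising it gives the unique stationary distribution.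
-/

section GeneratorMatrix

variable {n : Type*} [Fintype n]

structure Matrix.IsGenerator (Q : Matrix n n ℝ) : Prop where
  nonneg_of_ne : ∀ x y, x ≠ y → 0 ≤ Q x y
  sum_row : ∀ x, ∑ y, Q x y = 0

namespace Matrix.IsGenerator

variable {Q : Matrix n n ℝ} {ξ : n → ℝ}

theorem diag_nonpos (hQ : Q.IsGenerator) (x : n) : Q x x ≤ 0 := by
  classical
  have h := hQ.sum_row x
  rw [← add_sum_erase _ _ (mem_univ x)] at h
  have : 0 ≤ ∑ y ∈ univ.erase x, Q x y :=
    sum_nonneg fun y hy => hQ.nonneg_of_ne x y (ne_of_mem_erase hy).symm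
  linarith

theorem abs_vecMul_nonneg (hQ : Q.IsGenerator) (hξ : ξ ᵥ* Q = 0) (y : n) :
    0 ≤ (|ξ| ᵥ* Q) y := by
  classical
  have hy := congrFun hξ y
  simp only [vecMul, dotProduct, Pi.zero_apply, Pi.abs_apply] at hy ⊢
  rw [← add_sum_erase _ _ (mem_univ y)] at hy ⊢
  have hinflow : |ξ y| * -Q y y ≤ ∑ x ∈ univ.erase y, |ξ x| * Q x y :=
    calc |ξ y| * -Q y y = |∑ x ∈ univ.erase y, ξ x * Q x y| := by
          rw [eq_neg_of_add_eq_zero_right hy, abs_neg, abs_mul, abs_of_nonpos (hQ.diag_nonpos y)]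
      _ ≤ ∑ x ∈ univ.erase y, |ξ x * Q x y| := abs_sum_le_sum_abs _ _
      _ = ∑ x ∈ univ.erase y, |ξ x| * Q x y := sum_congr rfl fun x hx => by
          rw [abs_mul, abs_of_nonneg (hQ.nonneg_of_ne x y (ne_of_mem_erase hx))]
  linarith

theorem abs_vecMul_eq_zero (hQ : Q.IsGenerator) (hξ : ξ ᵥ* Q = 0) : |ξ| ᵥ* Q = 0 := by
  have htotal : ∑ y, (|ξ| ᵥ* Q) y = 0 := by
    simp only [vecMul, dotProduct]
    rw [sum_comm]
    simp only [← mul_sum, hQ.sum_row, mul_zero, sum_const_zero]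
  funext y
  exact (sum_eq_zero_iff_of_nonneg fun y _ => hQ.abs_vecMul_nonneg hξ y).1 htotal y (mem_univ y)

theorem eq_zero_of_reflTransGen (hQ : Q.IsGenerator) (hξ0 : 0 ≤ ξ) (hξ : ξ ᵥ* Q = 0) {x y : n}
    (hxy : Relation.ReflTransGen (fun a b => 0 < Q a b) x y) (hy : ξ y = 0) : ξ x = 0 := by
  induction hxy using Relation.ReflTransGen.head_induction_on with
  | refl => exact hy
  | @head a b hab _ ih =>
    have hterm : ∀ z ∈ univ, 0 ≤ ξ z * Q z b := fun z _ => by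
      rcases eq_or_ne z b with rfl | hzb
      · rw [ih, zero_mul]
      · exact mul_nonneg (hξ0 z) (hQ.nonneg_of_ne z b hzb)
    have hab0 := (sum_eq_zero_iff_of_nonneg hterm).1 (congrFun hξ b) a (mem_univ a)
    exact (mul_eq_zero.1 hab0).resolve_right hab.ne'

theorem nonneg_of_vecMul_eq_zero (hQ : Q.IsGenerator)
    (hconn : ∀ x y, Relation.ReflTransGen (fun a b => 0 < Q a b) x y)
    (hξ : ξ ᵥ* Q = 0) {y : n} (hy : 0 ≤ ξ y) : 0 ≤ ξ := by
  have hgap : (|ξ| - ξ) ᵥ* Q = 0 := by rw [sub_vecMul, hQ.abs_vecMul_eq_zero hξ, hξ, sub_zero]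
  intro x
  have hx : |ξ x| - ξ x = 0 := hQ.eq_zero_of_reflTransGen
    (fun z => sub_nonneg.2 (le_abs_self (ξ z))) hgap (hconn x y) (by simp [abs_of_nonneg hy])
  exact sub_eq_zero.1 hx ▸ abs_nonneg _

theorem pos_of_vecMul_eq_zero (hQ : Q.IsGenerator)
    (hconn : ∀ x y, Relation.ReflTransGen (fun a b => 0 < Q a b) x y)
    (hξ0 : 0 ≤ ξ) (hξ : ξ ᵥ* Q = 0) (hne : ξ ≠ 0) (x : n) : 0 < ξ x := by
  refine (hξ0 x).lt_of_ne fun hx => hne (funext fun y => ?_)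
  exact hQ.eq_zero_of_reflTransGen hξ0 hξ (hconn y x) hx.symm

theorem eq_zero_of_vecMul_eq_zero_of_sum_eq_zero (hQ : Q.IsGenerator)
    (hconn : ∀ x y, Relation.ReflTransGen (fun a b => 0 < Q a b) x y)
    (hξ : ξ ᵥ* Q = 0) (hsum : ∑ x, ξ x = 0) : ξ = 0 := by
  have nonneg_eq_zero : ∀ η : n → ℝ, 0 ≤ η → ∑ x, η x = 0 → η = 0 := fun η hη hη0 =>
    funext fun x => (sum_eq_zero_iff_of_nonneg fun x _ => hη x).1 hη0 x (mem_univ x)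
  funext x
  rcases le_total 0 (ξ x) with hx | hx
  · rw [nonneg_eq_zero ξ (hQ.nonneg_of_vecMul_eq_zero hconn hξ hx) hsum]
  · have hneg := nonneg_eq_zero (-ξ)
      (hQ.nonneg_of_vecMul_eq_zero hconn (by rw [neg_vecMul, hξ, neg_zero]) (neg_nonneg.2 hx))
      (by simp [hsum])
    simpa using congrFun hneg x

theorem exists_pos_vecMul_eq_zero [Nonempty n] (hQ : Q.IsGenerator)
    (hconn : ∀ x y, Relation.ReflTransGen (fun a b => 0 < Q a b) x y) :
    ∃ ξ : n → ℝ, ξ ᵥ* Q = 0 ∧ ∀ x, 0 < ξ x := by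
  classical
  have hdet : Q.det = 0 := by
    refine exists_mulVec_eq_zero_iff.1 ⟨1, one_ne_zero, funext fun x => ?_⟩
    simp [mulVec, dotProduct, hQ.sum_row x]
  obtain ⟨ξ, hne, hξ⟩ := exists_vecMul_eq_zero_iff.2 hdet
  obtain ⟨x₀⟩ := ‹Nonempty n›
  rcases le_total 0 (ξ x₀) with hx | hx
  · exact ⟨ξ, hξ,
      hQ.pos_of_vecMul_eq_zero hconn (hQ.nonneg_of_vecMul_eq_zero hconn hξ hx) hξ hne⟩
  · have hξ' : (-ξ) ᵥ* Q = 0 := by rw [neg_vecMul, hξ, neg_zero]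
    exact ⟨-ξ, hξ', hQ.pos_of_vecMul_eq_zero hconn
      (hQ.nonneg_of_vecMul_eq_zero hconn hξ' (neg_nonneg.2 hx)) hξ' (neg_ne_zero.2 hne)⟩

theorem existsUnique_stationary [Nonempty n] (hQ : Q.IsGenerator)
    (hconn : ∀ x y, Relation.ReflTransGen (fun a b => 0 < Q a b) x y) :
    ∃ ν : n → ℝ, (ν ᵥ* Q = 0 ∧ ∑ x, ν x = 1) ∧ (∀ x, 0 < ν x) ∧
      ∀ ν' : n → ℝ, (ν' ᵥ* Q = 0 ∧ ∑ x, ν' x = 1) → ν' = ν := by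
  obtain ⟨ξ, hξ, hpos⟩ := hQ.exists_pos_vecMul_eq_zero hconn
  have hmass : 0 < ∑ x, ξ x := sum_pos (fun x _ => hpos x) univ_nonempty
  set ν := (∑ x, ξ x)⁻¹ • ξ
  have hν : ν ᵥ* Q = 0 := by rw [smul_vecMul, hξ, smul_zero]
  have hν1 : ∑ x, ν x = 1 := by simp [ν, ← mul_sum, hmass.ne']
  refine ⟨ν, ⟨hν, hν1⟩, fun x => mul_pos (inv_pos.2 hmass) (hpos x), ?_⟩
  rintro ν' ⟨hν', hν'1⟩
  have hdiff := hQ.eq_zero_of_vecMul_eq_zero_of_sum_eq_zero (ξ := ν' - ν) hconn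
    (by rw [sub_vecMul, hν', hν, sub_zero]) (by simp [sum_sub_distrib, hν'1, hν1])
  exact sub_eq_zero.1 hdiff

end Matrix.IsGenerator
end GeneratorMatrix

theorem Pi.exists_lt_of_lt₂ {ι κ α : Type*} [Preorder α] {x y : ι → κ → α} (h : x < y) :
    ∃ i j, x i j < y i j := by
  obtain ⟨-, i, hi⟩ := Pi.lt_def.1 h
  obtain ⟨-, j, hj⟩ := Pi.lt_def.1 hi
  exact ⟨i, j, hj⟩

section UnitVectors

variable {C A : Type*} [DecidableEq C] [DecidableEq A] {x y : A → C → ℕ} {a : A} {c : C}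

theorem le_incr : x ≤ incr x a c := fun a' c' => by
  unfold incr
  split_ifs with h
  · obtain ⟨rfl, rfl⟩ := h; exact Nat.le_succ _
  · exact le_rfl

theorem lt_incr : x < incr x a c :=
  lt_of_le_of_ne le_incr fun h => by simpa [incr] using congrFun (congrFun h a) c

theorem incr_mono (h : x ≤ y) : incr x a c ≤ incr y a c := fun a' c' => by
  by_cases h' : a' = a ∧ c' = c
  · obtain ⟨rfl, rfl⟩ := h'; simpa [incr] using h a' c'
  · simpa [incr, h'] using h a' c'

theorem decr_le : decr x a c ≤ x := fun a' c' => by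
  unfold decr
  split_ifs with h
  · obtain ⟨rfl, rfl⟩ := h; exact Nat.sub_le _ _
  · exact le_rfl

theorem decr_lt (h : 0 < x a c) : decr x a c < x :=
  lt_of_le_of_ne decr_le fun h' => by
    have := congrFun (congrFun h' a) c
    simp [decr] at this
    omega

theorem le_decr (h : y ≤ x) (hlt : y a c < x a c) : y ≤ decr x a c := fun a' c' => by
  by_cases h' : a' = a ∧ c' = c
  · obtain ⟨rfl, rfl⟩ := h'; simp [decr]; omega
  · simpa [decr, h'] using h a' c'

theorem incr_decr (h : 0 < x a c) : incr (decr x a c) a c = x := by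
  funext a' c'
  by_cases h' : a' = a ∧ c' = c
  · obtain ⟨rfl, rfl⟩ := h'; simp [incr, decr]; omega
  · simp [incr, decr, h']

end UnitVectors

section Busy

variable {C A : Type*} [Fintype C] [DecidableEq A] {Ac : C → Finset A} {m : A → ℕ}
  {x y : A → C → ℕ} {a a' : A} {c : C}

theorem le_busy (h : a ∈ Ac c) : x a c ≤ busy Ac x a :=
  single_le_sum (f := fun c' => x a c') (fun _ _ => Nat.zero_le _) (by simp [h])

theorem busy_mono (h : x ≤ y) (a : A) : busy Ac x a ≤ busy Ac y a :=
  sum_le_sum fun c _ => h a c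

theorem busy_congr (h : x a = y a) : busy Ac x a = busy Ac y a := by
  simp only [busy, h]

theorem busy_incr_self [DecidableEq C] (hc : a ∈ Ac c) :
    busy Ac (incr x a c) a = busy Ac x a + 1 := by
  have hrow : ∀ c', incr x a c a c' = x a c' + if c' = c then 1 else 0 := fun c' => by
    by_cases h : c' = c <;> simp [incr, h]
  simp [busy, hrow, sum_add_distrib, hc]

theorem busy_incr_of_ne [DecidableEq C] (h : a' ≠ a) :
    busy Ac (incr x a c) a' = busy Ac x a' :=
  busy_congr (funext fun c' => by simp [incr, h])

theorem exists_isPreferred {succ : C → A → A → Prop} (hirr : ∀ c, ∀ a ∈ Ac c, ¬ succ c a a)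
    (htrans : ∀ c, ∀ a ∈ Ac c, ∀ b ∈ Ac c, ∀ d ∈ Ac c,
      succ c a b → succ c b d → succ c a d)
    (htotal : ∀ c, ∀ a ∈ Ac c, ∀ b ∈ Ac c, a ≠ b → succ c a b ∨ succ c b a)
    (hc : a ∈ Ac c) (hb : busy Ac x a < m a) : ∃ a', IsPreferred Ac succ m x c a' := by
  classical
  set free := (Ac c).filter fun a => busy Ac x a < m a
  -- a free type with the most free types below it is the `≻_c`-greatest one
  obtain ⟨â, hâ, hmax⟩ := free.exists_max_image (fun b => #(free.filter (succ c b)))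
    ⟨a, mem_filter.2 ⟨hc, hb⟩⟩
  rw [mem_filter] at hâ
  refine ⟨â, hâ.1, hâ.2, fun a' ha' hb' hne =>
    (htotal c â hâ.1 a' ha' hne.symm).resolve_right fun h => ?_⟩
  have hbelow : free.filter (succ c â) ⊂ free.filter (succ c a') := by
    refine (ssubset_iff_of_subset fun b hb => ?_).2
      ⟨â, mem_filter.2 ⟨mem_filter.2 hâ, h⟩, fun h' => hirr c â hâ.1 (mem_filter.1 h').2⟩
    obtain ⟨hbfree, hâb⟩ := mem_filter.1 hb
    exact mem_filter.2 ⟨hbfree, htrans c a' ha' â hâ.1 b (mem_filter.1 hbfree).1 h hâb⟩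
  exact (hmax a' (mem_filter.2 ⟨ha', hb'⟩)).not_gt (card_lt_card hbelow)

end Busy

theorem arrivals_nonneg {C : Type*} [Fintype C] {lam : C → ℝ} (hlam : ∀ c, 0 < lam c)
    (P : C → Prop) [DecidablePred P] : 0 ≤ ∑ c, if P c then lam c else 0 :=
  sum_nonneg fun c _ => ite_nonneg (hlam c).le le_rfl

theorem departures_nonneg {C A : Type*} [Fintype C] [Fintype A] [DecidableEq A]
    {Ac : C → Finset A} {mu : A → C → ℝ} {x : A → C → ℕ} (hmu : ∀ a c, a ∈ Ac c → 0 < mu a c)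
    (P : A → C → Prop) [∀ a c, Decidable (P a c)] :
    0 ≤ ∑ a, ∑ c, if a ∈ Ac c ∧ P a c then mu a c * (x a c : ℝ) else 0 :=
  sum_nonneg fun a _ => sum_nonneg fun c _ => by
    split_ifs with h
    · exact mul_nonneg (hmu a c h.1).le (Nat.cast_nonneg _)
    · exact le_rfl

section Chain

open scoped Classical

variable {C A : Type*} [Fintype C] [Fintype A] [DecidableEq C] [DecidableEq A]
  {Ac : C → Finset A} {lam : C → ℝ} {succ : C → A → A → Prop} {mu : A → C → ℝ} {m : A → ℕ}
  {x y : A → C → ℕ} {a : A} {c : C}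

theorem mem_stateSpace_iff : x ∈ stateSpace Ac m ↔
    (∀ a c, a ∉ Ac c → x a c = 0) ∧ ∀ a, busy Ac x a ≤ m a := by
  refine mem_filter.trans (and_iff_right_of_imp fun h => ?_)
  simp only [Fintype.mem_piFinset, mem_range, Nat.lt_succ_iff]
  intro a c
  by_cases hac : a ∈ Ac c
  · exact (le_busy hac).trans (h.2 a)
  · simp [h.1 a c hac]

theorem mem_Ac_of_pos (hx : x ∈ stateSpace Ac m) (h : 0 < x a c) : a ∈ Ac c := by
  by_contra hac
  exact h.ne' ((mem_stateSpace_iff.1 hx).1 a c hac)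

theorem mem_stateSpace_of_le (hy : y ∈ stateSpace Ac m) (h : x ≤ y) : x ∈ stateSpace Ac m := by
  rw [mem_stateSpace_iff] at hy ⊢
  exact ⟨fun a c hac => Nat.eq_zero_of_le_zero ((h a c).trans_eq (hy.1 a c hac)),
    fun a => (busy_mono h a).trans (hy.2 a)⟩

theorem zero_mem_stateSpace : (0 : A → C → ℕ) ∈ stateSpace Ac m :=
  mem_stateSpace_iff.2 ⟨fun _ _ _ => rfl, fun a => by simp [busy]⟩

theorem incr_mem (hx : x ∈ stateSpace Ac m) (hc : a ∈ Ac c) (hb : busy Ac x a < m a) :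
    incr x a c ∈ stateSpace Ac m := by
  rw [mem_stateSpace_iff] at hx ⊢
  refine ⟨fun a' c' hac' => ?_, fun a' => ?_⟩
  · have hne : ¬(a' = a ∧ c' = c) := by rintro ⟨rfl, rfl⟩; exact hac' hc
    simp [incr, hne, hx.1 a' c' hac']
  · rcases eq_or_ne a' a with rfl | h
    · rw [busy_incr_self hc]; exact hb
    · rw [busy_incr_of_ne h]; exact hx.2 a'

theorem decr_mem (hx : x ∈ stateSpace Ac m) : decr x a c ∈ stateSpace Ac m :=
  mem_stateSpace_of_le hx decr_le

theorem offRate_nonneg (hlam : ∀ c, 0 < lam c) (hmu : ∀ a c, a ∈ Ac c → 0 < mu a c) :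
    0 ≤ offRate Ac lam succ mu m x y :=
  add_nonneg (arrivals_nonneg hlam _) (departures_nonneg hmu _)

theorem offRate_incr_pos (hlam : ∀ c, 0 < lam c) (hmu : ∀ a c, a ∈ Ac c → 0 < mu a c)
    (hpref : IsPreferred Ac succ m x c a) : 0 < offRate Ac lam succ mu m x (incr x a c) :=
  add_pos_of_pos_of_nonneg
    (sum_pos' (fun c _ => ite_nonneg (hlam c).le le_rfl)
      ⟨c, mem_univ c, by rw [if_pos ⟨a, hpref, rfl⟩]; exact hlam c⟩)
    (departures_nonneg hmu _)

theorem offRate_decr_pos (hlam : ∀ c, 0 < lam c) (hmu : ∀ a c, a ∈ Ac c → 0 < mu a c)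
    (hc : a ∈ Ac c) (hpos : 0 < x a c) : 0 < offRate Ac lam succ mu m x (decr x a c) := by
  have hterm : ∀ a' c', 0 ≤ if a' ∈ Ac c' ∧ 0 < x a' c' ∧ decr x a c = decr x a' c'
      then mu a' c' * (x a' c' : ℝ) else 0 := fun a' c' => by
    split_ifs with h
    · exact mul_nonneg (hmu a' c' h.1).le (Nat.cast_nonneg _)
    · exact le_rfl
  refine add_pos_of_nonneg_of_pos (arrivals_nonneg hlam _)
    (sum_pos' (fun a' _ => sum_nonneg fun c' _ => hterm a' c') ⟨a, mem_univ a,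
      sum_pos' (fun c' _ => hterm a c') ⟨c, mem_univ c, ?_⟩⟩)
  rw [if_pos ⟨hc, hpos, rfl⟩]
  exact mul_pos (hmu a c hc) (Nat.cast_pos.2 hpos)

theorem qrate_of_ne (h : y ≠ x) : qrate Ac lam succ mu m x y = offRate Ac lam succ mu m x y :=
  if_neg h

theorem sum_qrate_eq_zero (hx : x ∈ stateSpace Ac m) :
    ∑ y ∈ stateSpace Ac m, qrate Ac lam succ mu m x y = 0 := by
  rw [← add_sum_erase _ _ hx, qrate, if_pos rfl,
    sum_congr rfl fun y hy => qrate_of_ne (ne_of_mem_erase hy), neg_add_cancel]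

theorem isGenerator_qrate (hlam : ∀ c, 0 < lam c) (hmu : ∀ a c, a ∈ Ac c → 0 < mu a c) :
    Matrix.IsGenerator fun x y : {x // x ∈ stateSpace Ac m} =>
      qrate Ac lam succ mu m x.1 y.1 where
  nonneg_of_ne x y h := by
    rw [qrate_of_ne (Subtype.coe_ne_coe.2 h.symm)]
    exact offRate_nonneg hlam hmu
  sum_row x := by
    rw [sum_coe_sort (stateSpace Ac m) (qrate Ac lam succ mu m x.1)]
    exact sum_qrate_eq_zero x.2

def Transition (Ac : C → Finset A) (lam : C → ℝ) (succ : C → A → A → Prop)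
    (mu : A → C → ℝ) (m : A → ℕ) (x y : {x // x ∈ stateSpace Ac m}) : Prop :=
  0 < qrate Ac lam succ mu m x.1 y.1

theorem transition_incr (hlam : ∀ c, 0 < lam c) (hmu : ∀ a c, a ∈ Ac c → 0 < mu a c)
    (x : {x // x ∈ stateSpace Ac m}) (hpref : IsPreferred Ac succ m x.1 c a) :
    Transition Ac lam succ mu m x ⟨incr x.1 a c, incr_mem x.2 hpref.1 hpref.2.1⟩ := by
  rw [Transition, qrate_of_ne lt_incr.ne']
  exact offRate_incr_pos hlam hmu hpref

theorem transition_decr (hlam : ∀ c, 0 < lam c) (hmu : ∀ a c, a ∈ Ac c → 0 < mu a c)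
    (x : {x // x ∈ stateSpace Ac m}) (hpos : 0 < x.1 a c) :
    Transition Ac lam succ mu m x ⟨decr x.1 a c, decr_mem x.2⟩ := by
  rw [Transition, qrate_of_ne (decr_lt hpos).ne]
  exact offRate_decr_pos hlam hmu (mem_Ac_of_pos x.2 hpos) hpos

theorem reach_of_le (hlam : ∀ c, 0 < lam c) (hmu : ∀ a c, a ∈ Ac c → 0 < mu a c)
    (x y : {x // x ∈ stateSpace Ac m}) (h : y ≤ x) :
    Relation.ReflTransGen (Transition Ac lam succ mu m) x y := by
  induction x using WellFoundedLT.induction with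
  | _ x ih =>
    rcases h.eq_or_lt with rfl | hlt
    · exact .refl
    obtain ⟨a, c, hac⟩ := Pi.exists_lt_of_lt₂ hlt
    have hpos : 0 < x.1 a c := (Nat.zero_le _).trans_lt hac
    exact .head (transition_decr hlam hmu x hpos) (ih _ (decr_lt hpos) (le_decr h hac))

theorem exists_reach_saturated (hlam : ∀ c, 0 < lam c) (hmu : ∀ a c, a ∈ Ac c → 0 < mu a c)
    (hdisp : ∀ x c a, a ∈ Ac c → busy Ac x a < m a → ∃ a', IsPreferred Ac succ m x c a')
    (x : {x // x ∈ stateSpace Ac m}) :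
    ∃ y, Relation.ReflTransGen (Transition Ac lam succ mu m) x y ∧ x ≤ y ∧
      ∀ c, ∀ a ∈ Ac c, busy Ac y.1 a = m a := by
  induction x using WellFoundedGT.induction with
  | _ x ih =>
    by_cases hfull : ∀ c, ∀ a ∈ Ac c, busy Ac x.1 a = m a
    · exact ⟨x, .refl, le_rfl, hfull⟩
    push Not at hfull
    obtain ⟨c, a, hc, hb⟩ := hfull
    obtain ⟨â, hpref⟩ := hdisp x.1 c a hc (((mem_stateSpace_iff.1 x.2).2 a).lt_of_ne hb)
    obtain ⟨y, hy, hle, hyfull⟩ := ih ⟨_, incr_mem x.2 hpref.1 hpref.2.1⟩ lt_incr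
    exact ⟨y, .head (transition_incr hlam hmu x hpref) hy, lt_incr.le.trans hle, hyfull⟩

theorem reach_incr (hlam : ∀ c, 0 < lam c) (hmu : ∀ a c, a ∈ Ac c → 0 < mu a c)
    (hdisp : ∀ x c a, a ∈ Ac c → busy Ac x a < m a → ∃ a', IsPreferred Ac succ m x c a')
    (x : {x // x ∈ stateSpace Ac m}) (hc : a ∈ Ac c) (hb : busy Ac x.1 a < m a) :
    Relation.ReflTransGen (Transition Ac lam succ mu m) x
      ⟨incr x.1 a c, incr_mem x.2 hc hb⟩ := by
  -- saturate every ambulance type, then release the type-`a` ambulances down to `x a`: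
  -- in the resulting state `a` is the only compatible type with a free ambulance
  obtain ⟨y, hxy, hle, hfull⟩ := exists_reach_saturated hlam hmu hdisp x
  have hzy : Function.update y.1 a (x.1 a) ≤ y.1 :=
    update_le_iff.2 ⟨hle a, fun _ _ => le_rfl⟩
  have hxz : x.1 ≤ Function.update y.1 a (x.1 a) :=
    le_update_iff.2 ⟨le_rfl, fun a' _ => hle a'⟩
  set z : {x // x ∈ stateSpace Ac m} := ⟨_, mem_stateSpace_of_le y.2 hzy⟩
  have hpref : IsPreferred Ac succ m z.1 c a := by
    refine ⟨hc, (busy_congr (Function.update_self ..)).trans_lt hb, fun a' ha' hfree hne => ?_⟩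
    rw [busy_congr (Function.update_of_ne hne ..), hfull c a' ha'] at hfree
    exact absurd hfree (lt_irrefl _)
  exact ((hxy.trans (reach_of_le hlam hmu y z hzy)).tail
    (transition_incr hlam hmu z hpref)).trans (reach_of_le hlam hmu _ _ (incr_mono hxz))

theorem reach_from_zero (hlam : ∀ c, 0 < lam c) (hmu : ∀ a c, a ∈ Ac c → 0 < mu a c)
    (hdisp : ∀ x c a, a ∈ Ac c → busy Ac x a < m a → ∃ a', IsPreferred Ac succ m x c a')
    (x : {x // x ∈ stateSpace Ac m}) :
    Relation.ReflTransGen (Transition Ac lam succ mu m) ⟨0, zero_mem_stateSpace⟩ x := by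
  induction x using WellFoundedLT.induction with
  | _ x ih =>
    rcases eq_or_ne x.1 0 with hx | hx
    · obtain rfl : ⟨0, zero_mem_stateSpace⟩ = x := Subtype.ext hx.symm
      exact .refl
    obtain ⟨a, c, hpos⟩ := Pi.exists_lt_of_lt₂ ((zero_le (a := x.1)).lt_of_ne hx.symm)
    have hc := mem_Ac_of_pos x.2 hpos
    set y : {x // x ∈ stateSpace Ac m} := ⟨decr x.1 a c, decr_mem x.2⟩
    have hb : busy Ac y.1 a < m a := by
      have h := busy_incr_self (Ac := Ac) (x := y.1) hc
      rw [incr_decr hpos] at h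
      have := (mem_stateSpace_iff.1 x.2).2 a
      omega
    have hyx : (⟨incr y.1 a c, incr_mem y.2 hc hb⟩ : {x // x ∈ stateSpace Ac m}) = x :=
      Subtype.ext (incr_decr hpos)
    exact (ih y (decr_lt hpos)).trans (hyx ▸ reach_incr hlam hmu hdisp y hc hb)

theorem reach (hlam : ∀ c, 0 < lam c) (hmu : ∀ a c, a ∈ Ac c → 0 < mu a c)
    (hdisp : ∀ x c a, a ∈ Ac c → busy Ac x a < m a → ∃ a', IsPreferred Ac succ m x c a')
    (x y : {x // x ∈ stateSpace Ac m}) :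
    Relation.ReflTransGen (Transition Ac lam succ mu m) x y :=
  (reach_of_le hlam hmu x ⟨0, zero_mem_stateSpace⟩ (zero_le (a := x.1))).trans
    (reach_from_zero hlam hmu hdisp y)

end Chain

section Ambulance

variable {C A : Type*} [Fintype C] [Fintype A] [DecidableEq C] [DecidableEq A]

theorem stmt3_general
    (Ac : C → Finset A) (lam : C → ℝ) (succ : C → A → A → Prop)
    (mu : A → C → ℝ) (m : A → ℕ)
    (hlam : ∀ c, 0 < lam c)
    (hmu : ∀ a c, a ∈ Ac c → 0 < mu a c)
    (hirr : ∀ c, ∀ a ∈ Ac c, ¬ succ c a a)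
    (htrans : ∀ c, ∀ a ∈ Ac c, ∀ b ∈ Ac c, ∀ d ∈ Ac c,
      succ c a b → succ c b d → succ c a d)
    (htotal : ∀ c, ∀ a ∈ Ac c, ∀ b ∈ Ac c, a ≠ b → succ c a b ∨ succ c b a) :
    ∃ ν : {x // x ∈ stateSpace Ac m} → ℝ,
      ((∀ x' : {x // x ∈ stateSpace Ac m},
          ∑ x : {x // x ∈ stateSpace Ac m},
            ν x * qrate Ac lam succ mu m x.1 x'.1 = 0) ∧
        ∑ x : {x // x ∈ stateSpace Ac m}, ν x = 1) ∧
      (∀ x : {x // x ∈ stateSpace Ac m}, 0 < ν x) ∧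
      ∀ ν' : {x // x ∈ stateSpace Ac m} → ℝ,
        ((∀ x' : {x // x ∈ stateSpace Ac m},
            ∑ x : {x // x ∈ stateSpace Ac m},
              ν' x * qrate Ac lam succ mu m x.1 x'.1 = 0) ∧
          ∑ x : {x // x ∈ stateSpace Ac m}, ν' x = 1) → ν' = ν := by
  have : Nonempty {x // x ∈ stateSpace Ac m} := ⟨⟨0, zero_mem_stateSpace⟩⟩
  have hdisp : ∀ x c a, a ∈ Ac c → busy Ac x a < m a → ∃ a', IsPreferred Ac succ m x c a' :=
    fun _ _ _ => exists_isPreferred hirr htrans htotal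
  simpa only [funext_iff, Matrix.vecMul, dotProduct, Pi.zero_apply] using
    (isGenerator_qrate hlam hmu).existsUnique_stationary (reach hlam hmu hdisp)

/-- The ambulance-station continuous-time Markov chain with supply
vector `m` has a unique stationary distribution: the balance equations
`∑_{x ∈ S(m)} ν_x q^m_{x,x'} = 0` for all `x' ∈ S(m)`, together with the normalization
`∑_{x ∈ S(m)} ν_x = 1`, have exactly one solution, and this solution is everywhere
positive. -/
theorem stmt3
    (Ac : C → Finset A) (lam : C → ℝ) (succ : C → A → A → Prop)
    (mu : A → C → ℝ) (m : A → ℕ)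
    (hAc : ∀ c, (Ac c).Nonempty)
    (hlam : ∀ c, 0 < lam c)
    (hmu : ∀ a c, a ∈ Ac c → 0 < mu a c)
    (hirr : ∀ c, ∀ a ∈ Ac c, ¬ succ c a a)
    (htrans : ∀ c, ∀ a ∈ Ac c, ∀ b ∈ Ac c, ∀ d ∈ Ac c,
      succ c a b → succ c b d → succ c a d)
    (htotal : ∀ c, ∀ a ∈ Ac c, ∀ b ∈ Ac c, a ≠ b → succ c a b ∨ succ c b a) :
    ∃ ν : {x // x ∈ stateSpace Ac m} → ℝ,
      ((∀ x' : {x // x ∈ stateSpace Ac m},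
          ∑ x : {x // x ∈ stateSpace Ac m},
            ν x * qrate Ac lam succ mu m x.1 x'.1 = 0) ∧
        ∑ x : {x // x ∈ stateSpace Ac m}, ν x = 1) ∧
      (∀ x : {x // x ∈ stateSpace Ac m}, 0 < ν x) ∧
      ∀ ν' : {x // x ∈ stateSpace Ac m} → ℝ,
        ((∀ x' : {x // x ∈ stateSpace Ac m},
            ∑ x : {x // x ∈ stateSpace Ac m},
              ν' x * qrate Ac lam succ mu m x.1 x'.1 = 0) ∧
          ∑ x : {x // x ∈ stateSpace Ac m}, ν' x = 1) → ν' = ν :=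
  stmt3_general Ac lam succ mu m hlam hmu hirr htrans htotal

end Ambulance
end
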